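/- arXiv:1805.01726 — 2 statements merged into one kernel-verified Lean document; each statement's English description precedes it below -/
import Mathlib

section
/- Let t₁, t₂ be positive integers, n ≥ 0 and k ≥ 1 integers. Let h ∈ ℂ[x,y] be quasi-homogeneous of type t = (t₁,t₂) and degree n + t₁ + t₂, let μ ∈ ℂ[x,y] be quasi-homogeneous of type t and degree n, and set F_n := X_h + μ·D₀. If f ∈ ℂ[x,y] is quasi-homogeneous of type t and degree k ≥ 1 and f divides h, then f is an invariant curve of F_n; that is, there exists a polynomial K ∈ ℂ[x,y] such that ∇f·F_n = K·f. -/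
open MvPolynomial

/-- A polynomial in two variables is quasi-homogeneous of type `(t₁,t₂)` and
degree `k` if every monomial `x^a y^b` occurring in it satisfies `t₁a + t₂b = k`. -/
def IsQH {K : Type*} [CommSemiring K] (t₁ t₂ k : ℕ) (p : MvPolynomial (Fin 2) K) : Prop :=
  ∀ m ∈ p.support, t₁ * m 0 + t₂ * m 1 = k

/-- `∇f · (P,Q)` for a planar polynomial vector field `(P,Q)`. -/
noncomputable def gradDot {K : Type*} [CommRing K]
    (f P Q : MvPolynomial (Fin 2) K) : MvPolynomial (Fin 2) K :=
  pderiv 0 f * P + pderiv 1 f * Q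

lemma X_mul_pderiv_monomial (i : Fin 2) (m : Fin 2 →₀ ℕ) (c : ℂ) :
    X i * pderiv i (monomial m c) = C ((m i : ℂ)) * monomial m c := by
  rw [pderiv_monomial]
  by_cases hmi : m i = 0
  · simp [hmi]
  · have hme : Finsupp.single i 1 + (m - Finsupp.single i 1) = m := by
      ext j
      by_cases hj : j = i
      · subst hj; simp [Finsupp.single_apply]; omega
      · simp [Finsupp.single_apply, hj, Ne.symm hj]
    rw [X, monomial_mul, C_mul_monomial, one_mul, mul_comm c, hme]

lemma euler (t₁ t₂ k : ℕ) (f : MvPolynomial (Fin 2) ℂ) (hf : IsQH t₁ t₂ k f) :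
    C (t₁:ℂ) * (X 0 * pderiv 0 f) + C (t₂:ℂ) * (X 1 * pderiv 1 f) = C (k:ℂ) * f := by
  conv_lhs => rw [f.as_sum]
  conv_rhs => rw [f.as_sum]
  rw [map_sum (pderiv 0), map_sum (pderiv 1)]
  simp only [Finset.mul_sum]
  rw [← Finset.sum_add_distrib]
  refine Finset.sum_congr rfl fun m hm => ?_
  rw [X_mul_pderiv_monomial, X_mul_pderiv_monomial, ← mul_assoc, ← mul_assoc,
    ← C_mul, ← C_mul, ← add_mul, ← C_add]
  have := hf m hm
  congr 1
  rw [← this]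
  push_cast
  ring

/-- Any quasi-homogeneous factor of `h` is an invariant curve of
`F_n = X_h + μ·D₀`. -/
theorem factor_of_hamiltonian_is_invariant_curve
    (t₁ t₂ : ℕ) (ht₁ : 0 < t₁) (ht₂ : 0 < t₂) (n k : ℕ) (hk : 1 ≤ k)
    (h μ f : MvPolynomial (Fin 2) ℂ)
    (hh : IsQH t₁ t₂ (n + t₁ + t₂) h)
    (hμ : IsQH t₁ t₂ n μ)
    (hf : IsQH t₁ t₂ k f)
    (hdvd : f ∣ h) :
    ∃ K : MvPolynomial (Fin 2) ℂ,
      gradDot f (-(pderiv 1 h) + μ * (C (t₁ : ℂ) * X 0))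
        (pderiv 0 h + μ * (C (t₂ : ℂ) * X 1)) = K * f := by
  obtain ⟨g, hg⟩ := hdvd
  refine ⟨pderiv 1 f * pderiv 0 g - pderiv 0 f * pderiv 1 g + μ * C (k:ℂ), ?_⟩
  have he := euler t₁ t₂ k f hf
  unfold gradDot
  rw [hg, pderiv_mul, pderiv_mul]
  linear_combination μ * he
end

section
/- Let b₂ ∈ ℝ. Define V : ℝ² → ℝ² by V(x,y) = (y − x²/3, 2x³ − (2/3)xy − b₂x⁴ + b₂y²) and f : ℝ² → ℝ by f(x,y) = (y − x²)(y + x²)²·exp(−3b₂x). Then f is a first integral of the vector field V: for all (x,y) ∈ ℝ², the Fréchet derivative of f at (x,y) evaluated at the vector V(x,y) is zero; equivalently, (∂f/∂x)(x,y)·(y − x²/3) + (∂f/∂y)(x,y)·(2x³ − (2/3)xy − b₂x⁴ + b₂y²) = 0 for all (x,y) ∈ ℝ². -/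
/-!
The curves `y = x²` and `y = -x²` are invariant: along the field,
`d/dt (y - x²) = (y - x²)·(b₂(y + x²) - 8x/3)` and `d/dt (y + x²) = (y + x²)·(b₂(y - x²) + 4x/3)`,
while `d/dt exp(-3b₂x) = exp(-3b₂x)·(-3b₂ ẋ)`. The first integral is the Darboux product
`(y - x²)(y + x²)² exp(-3b₂x)`, whose cofactor `K₁ + 2K₂ - 3b₂ẋ` vanishes identically.
-/

def IsDarboux {E : Type*} [NormedAddCommGroup E] [NormedSpace ℝ E] (V : E → E) (g K : E → ℝ) :
    Prop :=
  ∀ p, DifferentiableAt ℝ g p ∧ fderiv ℝ g p (V p) = K p * g p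

namespace IsDarboux

variable {E : Type*} [NormedAddCommGroup E] [NormedSpace ℝ E] {V : E → E} {g h K L : E → ℝ}

theorem mul (hg : IsDarboux V g K) (hh : IsDarboux V h L) :
    IsDarboux V (fun q => g q * h q) (fun q => K q + L q) := by
  intro p
  obtain ⟨hg_diff, hg_der⟩ := hg p
  obtain ⟨hh_diff, hh_der⟩ := hh p
  refine ⟨hg_diff.mul hh_diff, ?_⟩
  rw [fderiv_fun_mul hg_diff hh_diff]
  simp only [add_apply, smul_apply, smul_eq_mul, hg_der, hh_der]
  ring

theorem pow (hg : IsDarboux V g K) (n : ℕ) :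
    IsDarboux V (fun q => g q ^ n) (fun q => n * K q) := by
  induction n with
  | zero =>
    intro p
    simp
  | succ n ih =>
    convert ih.mul hg using 1 <;> ext q
    · ring
    · push_cast; ring

theorem exp (hh : ∀ p, DifferentiableAt ℝ h p) :
    IsDarboux V (fun q => Real.exp (h q)) (fun q => fderiv ℝ h q (V q)) := by
  intro p
  refine ⟨(hh p).exp, ?_⟩
  rw [fderiv_exp (hh p), smul_apply, smul_eq_mul, mul_comm]

theorem fderiv_apply_eq_zero (hg : IsDarboux V g K) (hK : ∀ p, K p = 0) (p : E) :
    fderiv ℝ g p (V p) = 0 := by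
  rw [(hg p).2, hK p, zero_mul]

end IsDarboux

noncomputable def nilpotentField (b₂ : ℝ) (p : ℝ × ℝ) : ℝ × ℝ :=
  (p.2 - p.1 ^ 2 / 3, 2 * p.1 ^ 3 - (2 / 3) * p.1 * p.2 - b₂ * p.1 ^ 4 + b₂ * p.2 ^ 2)

theorem isDarboux_snd_sub_fst_sq (b₂ : ℝ) :
    IsDarboux (nilpotentField b₂) (fun q => q.2 - q.1 ^ 2)
      (fun q => b₂ * (q.2 + q.1 ^ 2) - 8 / 3 * q.1) := by
  intro p
  have hd := (hasFDerivAt_snd (p := p) (𝕜 := ℝ)).fun_sub (hasFDerivAt_fst.pow 2)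
  refine ⟨hd.differentiableAt, ?_⟩
  rw [hd.fderiv]
  simp only [Nat.add_one_sub_one, pow_one, nsmul_eq_mul, Nat.cast_ofNat, nilpotentField, sub_apply,
    ContinuousLinearMap.coe_snd', smul_apply, ContinuousLinearMap.coe_fst', smul_eq_mul]
  ring

theorem isDarboux_snd_add_fst_sq (b₂ : ℝ) :
    IsDarboux (nilpotentField b₂) (fun q => q.2 + q.1 ^ 2)
      (fun q => b₂ * (q.2 - q.1 ^ 2) + 4 / 3 * q.1) := by
  intro p
  have hd := (hasFDerivAt_snd (p := p) (𝕜 := ℝ)).fun_add (hasFDerivAt_fst.pow 2)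
  refine ⟨hd.differentiableAt, ?_⟩
  rw [hd.fderiv]
  simp only [Nat.add_one_sub_one, pow_one, nsmul_eq_mul, Nat.cast_ofNat, nilpotentField, add_apply,
    ContinuousLinearMap.coe_snd', smul_apply, ContinuousLinearMap.coe_fst', smul_eq_mul]
  ring

theorem isDarboux_exp_const_mul_fst (b₂ : ℝ) :
    IsDarboux (nilpotentField b₂) (fun q => Real.exp (-3 * b₂ * q.1))
      (fun q => -3 * b₂ * (q.2 - q.1 ^ 2 / 3)) := by
  have hd (p : ℝ × ℝ) := (hasFDerivAt_fst (p := p) (𝕜 := ℝ)).const_mul (-3 * b₂)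
  convert IsDarboux.exp (V := nilpotentField b₂) fun p => (hd p).differentiableAt using 2 with p
  rw [(hd p).fderiv]
  simp [nilpotentField]

/-- `f(x,y) = (y − x²)(y + x²)²·exp(−3b₂x)` is a first integral of the vector
field `V(x,y) = (y − x²/3, 2x³ − (2/3)xy − b₂x⁴ + b₂y²)`: its Fréchet
derivative at each point vanishes on the vector `V(x,y)`. -/
theorem example_system_first_integral (b₂ : ℝ) :
    ∀ p : ℝ × ℝ,
      fderiv ℝ
        (fun q : ℝ × ℝ =>
          (q.2 - q.1 ^ 2) * (q.2 + q.1 ^ 2) ^ 2 * Real.exp (-3 * b₂ * q.1)) p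
        (p.2 - p.1 ^ 2 / 3,
         2 * p.1 ^ 3 - (2 / 3) * p.1 * p.2 - b₂ * p.1 ^ 4 + b₂ * p.2 ^ 2) = 0 :=
  (((isDarboux_snd_sub_fst_sq b₂).mul ((isDarboux_snd_add_fst_sq b₂).pow 2)).mul
    (isDarboux_exp_const_mul_fst b₂)).fderiv_apply_eq_zero fun q => by ring
end
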